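/- Let ρ and σ be quantum states on ℂ^d, let ε ∈ (0,1), and let (ℳ_n)_{n≥1} be a family where ℳ_n is a nonempty set of POVMs on (ℂ^d)^{⊗n}, closed under tensor products (for M_k ∈ ℳ_k and M_l ∈ ℳ_l, M_k ⊗ M_l ∈ ℳ_{k+l}). Define β_n^{ℳ_n}(ε) := inf { tr[σ^{⊗n} T] : T a matrix with 0 ≤ T ≤ 1 such that the binary POVM {T, 1−T} belongs to ℳ_n and 1 − tr[ρ^{⊗n} T] ≤ ε } (with inf over the empty set equal to +∞). Then limsup_{n→∞} −(1/n)·log β_n^{ℳ_n}(ε) ≤ inf_{α > 1} lim_{n→∞} (1/n)·D_α^{ℳ_n}(ρ^{⊗n}‖σ^{⊗n}). -/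

import Mathlib

open scoped Kronecker ComplexOrder
open Matrix Filter

noncomputable section
open scoped Classical

namespace MRD

/-- A POVM on the Hilbert space `ℂ^n` (for a finite index type `n`), over a finite
outcome alphabet `ι`. -/
structure POVM (n : Type) [Fintype n] [DecidableEq n] where
  ι : Type
  [fin : Fintype ι]
  elem : ι → Matrix n n ℂ
  pos : ∀ z, (elem z).PosSemidef
  sum_one : ∑ z, elem z = 1

attribute [instance] POVM.fin

variable {n : Type} [Fintype n] [DecidableEq n]

/-- The probability distribution induced by a state and a POVM (Born rule). -/
def POVM.dist (M : POVM n) (ρ : Matrix n n ℂ) : M.ι → ℝ :=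
  fun z => ((ρ * M.elem z).trace).re

/-- `tr2 A B = Re tr[A B]`. -/
def tr2 (A B : Matrix n n ℂ) : ℝ := ((A * B).trace).re

/-- The cone `C_ℳ` generated by a set of POVMs: the union of the conical hulls of the POVMs. -/
def cone (𝓜 : Set (POVM n)) : Set (Matrix n n ℂ) :=
  { ω | ∃ M ∈ 𝓜, ∃ lam : M.ι → ℝ, (∀ z, 0 ≤ lam z) ∧ ω = ∑ z, (lam z : ℂ) • M.elem z }

/-- Functional calculus for Hermitian matrices (junk value `0` on non-Hermitian input). -/
def hermCFC (f : ℝ → ℝ) (ω : Matrix n n ℂ) : Matrix n n ℂ :=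
  if h : ω.IsHermitian then
    (h.eigenvectorUnitary : Matrix n n ℂ) * Matrix.diagonal (fun i => (f (h.eigenvalues i) : ℂ)) *
      star (h.eigenvectorUnitary : Matrix n n ℂ)
  else 0

/-- Real powers of a (Hermitian, positive definite) matrix, via functional calculus. -/
def mpow (ω : Matrix n n ℂ) (p : ℝ) : Matrix n n ℂ := hermCFC (fun x => x ^ p) ω

/-- Logarithm of a (Hermitian, positive definite) matrix, via functional calculus. -/
def mlog (ω : Matrix n n ℂ) : Matrix n n ℂ := hermCFC Real.log ω

/-- The classical quantity `Q_α(μ‖ν) = ∑_z μ(z)^α ν(z)^(1-α)`. -/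
def Qclass {Z : Type} [Fintype Z] (α : ℝ) (μ ν : Z → ℝ) : ℝ :=
  ∑ z, μ z ^ α * ν z ^ (1 - α)

/-- `Q_α` for `α > 1`, valued in `[0,∞]`: it is `+∞` unless `μ ≪ ν`. -/
def QclassE {Z : Type} [Fintype Z] (α : ℝ) (μ ν : Z → ℝ) : EReal :=
  if ∀ z, ν z = 0 → μ z = 0 then ((Qclass α μ ν : ℝ) : EReal) else ⊤

/-- The classical max-divergence `D_∞(μ‖ν) = max_{z : μ(z) ≠ 0} log (μ(z)/ν(z))`,
with the convention `log (c/0) = +∞`. -/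
def Dmax {Z : Type} [Fintype Z] (μ ν : Z → ℝ) : EReal :=
  ⨆ z : {z : Z // μ z ≠ 0},
    (if ν z.1 = 0 then (⊤ : EReal) else ((Real.log (μ z.1 / ν z.1) : ℝ) : EReal))

/-- The classical Rényi divergence of order `α ∈ (0,∞]` (`α : EReal`), with the standard
conventions for `+∞` in the non-absolutely-continuous / orthogonal cases. -/
def rdiv {Z : Type} [Fintype Z] (α : EReal) (μ ν : Z → ℝ) : EReal :=
  if α = ⊤ then Dmax μ ν
  else if α = 1 then
    (if ∀ z, ν z = 0 → μ z = 0 then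
      (((∑ z, μ z * Real.log (μ z / ν z)) : ℝ) : EReal) else ⊤)
  else if 1 < α then
    (if ∀ z, ν z = 0 → μ z = 0 then
      (((α.toReal - 1)⁻¹ * Real.log (Qclass α.toReal μ ν) : ℝ) : EReal) else ⊤)
  else
    (if ∃ z, μ z ≠ 0 ∧ ν z ≠ 0 then
      (((α.toReal - 1)⁻¹ * Real.log (Qclass α.toReal μ ν) : ℝ) : EReal) else ⊤)

/-- The measured Rényi divergence `D_α^ℳ(ρ‖σ) = sup_{M ∈ ℳ} D_α(μ_ρ^M‖μ_σ^M)`. -/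
def mrdiv (𝓜 : Set (POVM n)) (α : EReal) (ρ σ : Matrix n n ℂ) : EReal :=
  ⨆ M ∈ 𝓜, rdiv α (M.dist ρ) (M.dist σ)

/-- The variational objective function `ν_α((ρ,σ); ω)`, for `α ∈ (0,∞]`. -/
def nuObj (α : EReal) (ρ σ ω : Matrix n n ℂ) : ℝ :=
  if α = ⊤ then Real.log (tr2 ρ ω) + 1 - tr2 σ ω
  else if α = 1 then tr2 ρ (mlog ω) + 1 - tr2 σ ω
  else if α.toReal < 1 / 2 then
    (α.toReal - 1)⁻¹ *
      Real.log (α.toReal * tr2 ρ ω + (1 - α.toReal) * tr2 σ (mpow ω (α.toReal / (α.toReal - 1))))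
  else
    (α.toReal - 1)⁻¹ *
      Real.log (α.toReal * tr2 ρ (mpow ω ((α.toReal - 1) / α.toReal)) + (1 - α.toReal) * tr2 σ ω)

section Bipartite

variable (a b : Type) [Fintype a] [DecidableEq a] [Fintype b] [DecidableEq b]

/-- A family of mutually orthogonal orthogonal projections summing to the identity. -/
def IsOrthProjFamily {ι : Type} [Fintype ι] {m : Type} [Fintype m] [DecidableEq m]
    (P : ι → Matrix m m ℂ) : Prop :=
  (∀ x, (P x).IsHermitian) ∧ (∀ x, P x * P x = P x) ∧
    (∀ x y, x ≠ y → P x * P y = 0) ∧ ∑ x, P x = 1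

/-- The class `P-LO(A:B)` of local projective measurements. -/
def PLO : Set (POVM (a × b)) :=
  { M | ∃ (X Y : Type) (_ : Fintype X) (_ : Fintype Y)
      (PA : X → Matrix a a ℂ) (PB : Y → Matrix b b ℂ) (e : M.ι ≃ X × Y),
      IsOrthProjFamily PA ∧ IsOrthProjFamily PB ∧
      ∀ z, M.elem z = PA (e z).1 ⊗ₖ PB (e z).2 }

/-- The class `LO(A:B)` of local measurements. -/
def LO : Set (POVM (a × b)) :=
  { M | ∃ (MA : POVM a) (MB : POVM b) (e : M.ι ≃ MA.ι × MB.ι),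
      ∀ z, M.elem z = MA.elem (e z).1 ⊗ₖ MB.elem (e z).2 }

/-- The partial transpose (transposition of the `B` tensor factor). -/
def ptrans {a b : Type} (X : Matrix (a × b) (a × b) ℂ) : Matrix (a × b) (a × b) ℂ :=
  Matrix.of fun x y => X (x.1, y.2) (y.1, x.2)

/-- Separable (positive semidefinite) operators: finite sums of tensor products of positive
semidefinite operators. -/
def SepMat {a b : Type} [Fintype a] [DecidableEq a] [Fintype b] [DecidableEq b]
    (ω : Matrix (a × b) (a × b) ℂ) : Prop :=
  ∃ (k : ℕ) (X : Fin k → Matrix a a ℂ) (Y : Fin k → Matrix b b ℂ),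
    (∀ z, (X z).PosSemidef) ∧ (∀ z, (Y z).PosSemidef) ∧ ω = ∑ z, X z ⊗ₖ Y z

/-- The class `SEP(A:B)`: POVMs all of whose elements are separable. -/
def SEP : Set (POVM (a × b)) := { M | ∀ z, SepMat (M.elem z) }

/-- The class `PPT(A:B)`: POVMs all of whose elements have positive semidefinite
partial transpose. -/
def PPT : Set (POVM (a × b)) := { M | ∀ z, (ptrans (M.elem z)).PosSemidef }

end Bipartite

/-- The maximally entangled state `Φ` on `ℂ^d ⊗ ℂ^d`. -/
def maxEnt (d : ℕ) : Matrix (Fin d × Fin d) (Fin d × Fin d) ℂ :=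
  Matrix.of fun x y => if x.1 = x.2 ∧ y.1 = y.2 then ((d : ℂ))⁻¹ else 0

/-- The orthogonal complement `Φ⊥ = (1 - Φ)/(d² - 1)`. -/
def maxEntPerp (d : ℕ) : Matrix (Fin d × Fin d) (Fin d × Fin d) ℂ :=
  ((d : ℂ) ^ 2 - 1)⁻¹ • (1 - maxEnt d)

/-- The isotropic state `i(q) = q Φ + (1 - q) Φ⊥`. -/
def iso (d : ℕ) (q : ℝ) : Matrix (Fin d × Fin d) (Fin d × Fin d) ℂ :=
  (q : ℂ) • maxEnt d + ((1 - q : ℝ) : ℂ) • maxEntPerp d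

/-- The `n`-fold tensor (Kronecker) power of a matrix on `ℂ^d`. -/
def tpow {d : ℕ} (ρ : Matrix (Fin d) (Fin d) ℂ) (n : ℕ) :
    Matrix (Fin n → Fin d) (Fin n → Fin d) ℂ :=
  Matrix.of fun x y => ∏ i, ρ (x i) (y i)

/-- The `n`-fold tensor power of a bipartite matrix on `ℂ^d ⊗ ℂ^d`, written on
`((ℂ^d)^{⊗n})_A ⊗ ((ℂ^d)^{⊗n})_B`, i.e. with all `A`-factors grouped into one block and all
`B`-factors into the other. -/
def tpowBip {d : ℕ} (ρ : Matrix (Fin d × Fin d) (Fin d × Fin d) ℂ) (n : ℕ) :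
    Matrix ((Fin n → Fin d) × (Fin n → Fin d)) ((Fin n → Fin d) × (Fin n → Fin d)) ℂ :=
  Matrix.of fun x y => ∏ i, ρ (x.1 i, x.2 i) (y.1 i, y.2 i)

/-- The tensor product of a matrix on `(ℂ^d)^{⊗k}` and a matrix on `(ℂ^d)^{⊗l}`, as a matrix
on `(ℂ^d)^{⊗(k+l)}`. -/
def prodElem {d k l : ℕ} (A : Matrix (Fin k → Fin d) (Fin k → Fin d) ℂ)
    (B : Matrix (Fin l → Fin d) (Fin l → Fin d) ℂ) :
    Matrix (Fin (k + l) → Fin d) (Fin (k + l) → Fin d) ℂ :=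
  Matrix.of fun x y =>
    A (fun i => x (Fin.castAdd l i)) (fun i => y (Fin.castAdd l i)) *
      B (fun j => x (Fin.natAdd k j)) (fun j => y (Fin.natAdd k j))

/-- A family `(ℳ_n)_n` of measurement sets is closed under tensor products if for all
`M_k ∈ ℳ_k` and `M_l ∈ ℳ_l` the product POVM `M_k ⊗ M_l` belongs to `ℳ_{k+l}`. -/
def TensorClosed {d : ℕ} (𝓜 : ∀ m : ℕ, Set (POVM (Fin m → Fin d))) : Prop :=
  ∀ k l : ℕ, ∀ Mk ∈ 𝓜 k, ∀ Ml ∈ 𝓜 l,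
    ∃ M ∈ 𝓜 (k + l), ∃ e : Mk.ι × Ml.ι ≃ M.ι,
      ∀ z, M.elem (e z) = prodElem (Mk.elem z.1) (Ml.elem z.2)

/-- `T` is a test available in the measurement set `𝓝`: `0 ≤ T ≤ 1` and the binary POVM
`{T, 1 - T}` belongs to `𝓝`. -/
def IsTest {m : Type} [Fintype m] [DecidableEq m] (𝓝 : Set (POVM m)) (T : Matrix m m ℂ) : Prop :=
  T.PosSemidef ∧ (1 - T).PosSemidef ∧
    ∃ M ∈ 𝓝, ∃ e : M.ι ≃ Bool, M.elem (e.symm true) = T ∧ M.elem (e.symm false) = 1 - T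

/-- Extended-real logarithm of a real number: `-∞` on `(-∞,0]`. -/
def elogr (x : ℝ) : EReal := if x ≤ 0 then ⊥ else ((Real.log x : ℝ) : EReal)

/-- Extended-real logarithm on `EReal`. -/
def elog (x : EReal) : EReal :=
  if x ≤ 0 then ⊥ else if x = ⊤ then ⊤ else ((Real.log x.toReal : ℝ) : EReal)


/-- Extra: the action of `id_m ⊗ 𝒢` on block matrices (for complete positivity). -/
def blockApply {d : ℕ} (𝒢 : Matrix (Fin d) (Fin d) ℂ →ₗ[ℂ] Matrix (Fin d) (Fin d) ℂ) (m : ℕ)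
    (X : Matrix (Fin m × Fin d) (Fin m × Fin d) ℂ) : Matrix (Fin m × Fin d) (Fin m × Fin d) ℂ :=
  Matrix.of fun p q => 𝒢 (Matrix.of fun s t => X (p.1, s) (q.1, t)) p.2 q.2


section Aux

lemma psd_diag_nonneg {k : Type} [Fintype k] [DecidableEq k] {A : Matrix k k ℂ}
    (hA : A.PosSemidef) (i : k) : 0 ≤ A i i := by
  exact hA.diag_nonneg

lemma psd_trace_re_nonneg {k : Type} [Fintype k] [DecidableEq k] {A : Matrix k k ℂ}
    (hA : A.PosSemidef) : 0 ≤ (A.trace).re := by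
  have h : (0 : ℂ) ≤ A.trace := Finset.sum_nonneg fun i _ => psd_diag_nonneg hA i
  exact (Complex.le_def.mp h).1

lemma psd_exists_ct_mul_self {k : Type} [Fintype k] [DecidableEq k] {A : Matrix k k ℂ}
    (hA : A.PosSemidef) : ∃ B : Matrix k k ℂ, A = Bᴴ * B := by
  open scoped MatrixOrder in
  refine ⟨CFC.sqrt A, ?_⟩
  open scoped MatrixOrder in
  have h1 := CFC.sqrt_mul_sqrt_self A hA.nonneg
  open scoped MatrixOrder in
  have h2 : (CFC.sqrt A)ᴴ = CFC.sqrt A := (CFC.sqrt_nonneg A).isSelfAdjoint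
  rw [h2, h1]

lemma tr2_nonneg {k : Type} [Fintype k] [DecidableEq k] {A B : Matrix k k ℂ}
    (hA : A.PosSemidef) (hB : B.PosSemidef) : 0 ≤ tr2 A B := by
  obtain ⟨C, rfl⟩ := psd_exists_ct_mul_self hA
  unfold tr2
  rw [Matrix.mul_assoc, Matrix.trace_mul_comm]
  exact psd_trace_re_nonneg (hB.mul_mul_conjTranspose_same C)

lemma tpow_mul' {d m : ℕ} (A B : Matrix (Fin d) (Fin d) ℂ) :
    tpow (A * B) m = tpow A m * tpow B m := by
  ext x y
  simp only [tpow, Matrix.mul_apply, Matrix.of_apply]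
  rw [Finset.prod_univ_sum]
  exact Fintype.sum_congr _ _ fun g => Finset.prod_mul_distrib

lemma tpow_conjTranspose' {d m : ℕ} (A : Matrix (Fin d) (Fin d) ℂ) :
    (tpow A m)ᴴ = tpow Aᴴ m := by
  ext x y
  simp [tpow, Matrix.conjTranspose_apply, map_prod]

lemma tpow_posSemidef {d m : ℕ} {A : Matrix (Fin d) (Fin d) ℂ} (hA : A.PosSemidef) :
    (tpow A m).PosSemidef := by
  obtain ⟨B, rfl⟩ := psd_exists_ct_mul_self hA
  rw [tpow_mul', ← tpow_conjTranspose']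
  exact Matrix.posSemidef_conjTranspose_mul_self _

lemma rdiv_coe_of_one_lt {Z : Type} [Fintype Z] {α : ℝ} (hα : 1 < α) (μ ν : Z → ℝ) :
    rdiv (α : EReal) μ ν =
      if ∀ z, ν z = 0 → μ z = 0 then
        (((α - 1)⁻¹ * Real.log (Qclass α μ ν) : ℝ) : EReal) else ⊤ := by
  have h1 : (α : EReal) ≠ ⊤ := EReal.coe_ne_top α
  have h2 : (α : EReal) ≠ 1 := by
    rw [← EReal.coe_one]
    exact_mod_cast hα.ne'
  have h3 : (1 : EReal) < (α : EReal) := by exact_mod_cast hα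
  rw [rdiv, if_neg h1, if_neg h2, if_pos h3, EReal.toReal_coe]

lemma elog_coe_pos {x : ℝ} (hx : 0 < x) : elog (x : EReal) = ((Real.log x : ℝ) : EReal) := by
  have h0 : ¬((x : EReal) ≤ 0) := not_le.mpr (by exact_mod_cast hx)
  rw [elog, if_neg h0, if_neg (EReal.coe_ne_top x), EReal.toReal_coe]

lemma elog_top : elog (⊤ : EReal) = ⊤ := by
  have h0 : ¬((⊤ : EReal) ≤ 0) := by simp
  rw [elog, if_neg h0, if_pos rfl]

lemma test_lb {k : Type} [Fintype k] [DecidableEq k] {N : Set (POVM k)}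
    {A B : Matrix k k ℂ} (hA : A.PosSemidef) (hB : B.PosSemidef)
    {ε α Dr : ℝ} (hε0 : 0 < ε) (hε : ε < 1) (hα : 1 < α)
    (hD : mrdiv N (α : EReal) A B ≤ ((Dr : ℝ) : EReal))
    {T : Matrix k k ℂ} (hT : IsTest N T) (herr : 1 - tr2 A T ≤ ε) :
    Real.exp (α / (α - 1) * Real.log (1 - ε) - Dr) ≤ tr2 B T := by
  obtain ⟨hT1, hT2, M, hM, e, htrue, hfalse⟩ := hT
  set μ := M.dist A with hμdef
  set ν := M.dist B with hνdef
  have hμ : ∀ z, 0 ≤ μ z := fun z => tr2_nonneg hA (M.pos z)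
  have hν : ∀ z, 0 ≤ ν z := fun z => tr2_nonneg hB (M.pos z)
  have hp : μ (e.symm true) = tr2 A T := by simp only [hμdef, POVM.dist, tr2, htrue]
  have hq : ν (e.symm true) = tr2 B T := by simp only [hνdef, POVM.dist, tr2, htrue]
  set p := tr2 A T with hpdef
  set q := tr2 B T with hqdef
  have hε' : 0 < 1 - ε := by linarith
  have hp1 : 1 - ε ≤ p := by linarith
  have hppos : 0 < p := lt_of_lt_of_le hε' hp1
  have hrd : rdiv (α : EReal) μ ν ≤ ((Dr : ℝ) : EReal) := by
    refine le_trans ?_ hD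
    rw [mrdiv]
    exact le_biSup (f := fun M : POVM k => rdiv (α : EReal) (M.dist A) (M.dist B)) hM
  have habs : ∀ z, ν z = 0 → μ z = 0 := by
    by_contra hcon
    rw [rdiv_coe_of_one_lt hα, if_neg hcon] at hrd
    simp at hrd
  have hq0 : 0 < q := by
    rcases eq_or_lt_of_le (hq ▸ hν (e.symm true)) with h | h
    · exfalso
      have h0 : μ (e.symm true) = 0 := habs (e.symm true) (by rw [hq, ← h])
      rw [hp] at h0
      exact absurd h0 hppos.ne'
    · exact h
  have hrdc : (α - 1)⁻¹ * Real.log (Qclass α μ ν) ≤ Dr := by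
    rw [rdiv_coe_of_one_lt hα, if_pos habs] at hrd
    exact EReal.coe_le_coe_iff.mp hrd
  have hQge : p ^ α * q ^ (1 - α) ≤ Qclass α μ ν := by
    rw [Qclass]
    calc p ^ α * q ^ (1 - α) = μ (e.symm true) ^ α * ν (e.symm true) ^ (1 - α) := by
          rw [hp, hq]
      _ ≤ ∑ z, μ z ^ α * ν z ^ (1 - α) :=
          Finset.single_le_sum (f := fun z => μ z ^ α * ν z ^ (1 - α))
            (fun z _ => mul_nonneg (Real.rpow_nonneg (hμ z) _) (Real.rpow_nonneg (hν z) _))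
            (Finset.mem_univ (e.symm true))
  have hQpos : 0 < p ^ α * q ^ (1 - α) :=
    mul_pos (Real.rpow_pos_of_pos hppos _) (Real.rpow_pos_of_pos hq0 _)
  have hlog1 : Real.log (p ^ α * q ^ (1 - α)) ≤ Real.log (Qclass α μ ν) :=
    Real.log_le_log hQpos hQge
  have hlog2 : Real.log (p ^ α * q ^ (1 - α)) = α * Real.log p + (1 - α) * Real.log q := by
    rw [Real.log_mul (Real.rpow_pos_of_pos hppos α).ne' (Real.rpow_pos_of_pos hq0 _).ne',
      Real.log_rpow hppos, Real.log_rpow hq0]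
  have hαpos : 0 < α - 1 := by linarith
  have hmain : α / (α - 1) * Real.log (1 - ε) - Dr ≤ Real.log q := by
    have h1 : (α - 1)⁻¹ * (α * Real.log p + (1 - α) * Real.log q)
        ≤ (α - 1)⁻¹ * Real.log (Qclass α μ ν) := by
      refine mul_le_mul_of_nonneg_left ?_ (inv_nonneg.mpr hαpos.le)
      rw [← hlog2]; exact hlog1
    have h2 : (α - 1)⁻¹ * (α * Real.log p + (1 - α) * Real.log q)
        = α / (α - 1) * Real.log p - Real.log q := by
      field_simp
      ring
    have h3 : α / (α - 1) * Real.log (1 - ε) ≤ α / (α - 1) * Real.log p :=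
      mul_le_mul_of_nonneg_left (Real.log_le_log hε' hp1) (by positivity)
    linarith
  calc Real.exp (α / (α - 1) * Real.log (1 - ε) - Dr)
      ≤ Real.exp (Real.log q) := Real.exp_le_exp.mpr hmain
    _ = q := Real.exp_log hq0

end Aux

theorem stmt14 (d : ℕ) (ρ σ : Matrix (Fin d) (Fin d) ℂ)
    (hρ : ρ.PosSemidef) (hρ1 : ρ.trace = 1) (hσ : σ.PosSemidef) (hσ1 : σ.trace = 1)
    (ε : ℝ) (hε : ε ∈ Set.Ioo (0 : ℝ) 1)
    (𝓜 : ∀ m : ℕ, Set (POVM (Fin m → Fin d)))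
    (hne : ∀ m, 1 ≤ m → (𝓜 m).Nonempty)
    (hclose : TensorClosed 𝓜) :
    Filter.limsup (fun m : ℕ =>
        ((-(m : ℝ)⁻¹ : ℝ) : EReal) *
          elog (sInf {x : EReal | ∃ T : Matrix (Fin m → Fin d) (Fin m → Fin d) ℂ,
            IsTest (𝓜 m) T ∧ 1 - tr2 (tpow ρ m) T ≤ ε ∧
            x = ((tr2 (tpow σ m) T : ℝ) : EReal)})) atTop
      ≤ ⨅ α ∈ Set.Ioi (1 : ℝ),
          Filter.limsup (fun m : ℕ =>
            (((m : ℝ)⁻¹ : ℝ) : EReal) * mrdiv (𝓜 m) (α : EReal) (tpow ρ m) (tpow σ m)) atTop := by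
  refine le_iInf fun α => le_iInf fun hα => ?_
  have hα1 : (1 : ℝ) < α := hα
  have hε0 := hε.1
  have hε1 := hε.2
  set c : ℝ := -(α / (α - 1) * Real.log (1 - ε)) with hcdef
  set g : ℕ → EReal := fun m =>
    (((m : ℝ)⁻¹ : ℝ) : EReal) * mrdiv (𝓜 m) (α : EReal) (tpow ρ m) (tpow σ m) with hgdef
  set u : ℕ → EReal := fun m => ((c * (m : ℝ)⁻¹ : ℝ) : EReal) with hudef
  have key : ∀ m : ℕ, 1 ≤ m →
      ((-(m : ℝ)⁻¹ : ℝ) : EReal) *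
        elog (sInf {x : EReal | ∃ T : Matrix (Fin m → Fin d) (Fin m → Fin d) ℂ,
          IsTest (𝓜 m) T ∧ 1 - tr2 (tpow ρ m) T ≤ ε ∧
          x = ((tr2 (tpow σ m) T : ℝ) : EReal)}) ≤ g m + u m := by
    intro m hm
    have hm0 : (0 : ℝ) < (m : ℝ) := by exact_mod_cast hm
    have hminv : 0 < ((m : ℝ))⁻¹ := by positivity
    set S : Set EReal := {x : EReal | ∃ T : Matrix (Fin m → Fin d) (Fin m → Fin d) ℂ,
          IsTest (𝓜 m) T ∧ 1 - tr2 (tpow ρ m) T ≤ ε ∧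
          x = ((tr2 (tpow σ m) T : ℝ) : EReal)} with hSdef
    rcases Set.eq_empty_or_nonempty S with hS | hS
    · rw [hS, sInf_empty, elog_top, EReal.coe_mul_top_of_neg (by linarith : -(m : ℝ)⁻¹ < 0)]
      exact bot_le
    · obtain ⟨x₀, T₀, hT₀, he₀, hx₀⟩ := hS
      set D := mrdiv (𝓜 m) (α : EReal) (tpow ρ m) (tpow σ m) with hDdef
      obtain ⟨M₀, hM₀, e₀, h₀t, h₀f⟩ := hT₀.2.2
      have hr₀ : rdiv (α : EReal) (M₀.dist (tpow ρ m)) (M₀.dist (tpow σ m)) ≤ D := by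
        rw [hDdef, mrdiv]
        exact le_biSup
          (f := fun M : POVM (Fin m → Fin d) =>
            rdiv (α : EReal) (M.dist (tpow ρ m)) (M.dist (tpow σ m))) hM₀
      have hDb : D ≠ ⊥ := by
        intro h
        rw [h, le_bot_iff, rdiv_coe_of_one_lt hα1] at hr₀
        split_ifs at hr₀
        exact EReal.coe_ne_bot _ hr₀
        exact absurd hr₀ (by simp)
      by_cases hDt : D = ⊤
      · have hgm : g m = ⊤ := by
          rw [hgdef]
          simp only
          rw [← hDdef, hDt, EReal.coe_mul_top_of_pos hminv]
        rw [hgm]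
        have htu : (⊤ : EReal) + u m = ⊤ := by
          rw [hudef]
          exact EReal.top_add_coe _
        rw [htu]
        exact le_top
      · set Dr : ℝ := D.toReal with hDrdef
        have hDcoe : D = ((Dr : ℝ) : EReal) := (EReal.coe_toReal hDt hDb).symm
        set a : ℝ := α / (α - 1) * Real.log (1 - ε) - Dr with hadef
        have hDle : mrdiv (𝓜 m) (α : EReal) (tpow ρ m) (tpow σ m) ≤ ((Dr : ℝ) : EReal) := by
          rw [← hDdef]
          exact le_of_eq hDcoe
        have hcore : ∀ x ∈ S, ((Real.exp a : ℝ) : EReal) ≤ x := by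
          rintro x ⟨T, hT, herr, rfl⟩
          exact EReal.coe_le_coe_iff.mpr
            (test_lb (tpow_posSemidef hρ) (tpow_posSemidef hσ) hε0 hε1 hα1 hDle hT herr)
        have hlb : ((Real.exp a : ℝ) : EReal) ≤ sInf S := le_sInf hcore
        have hub : sInf S ≤ ((tr2 (tpow σ m) T₀ : ℝ) : EReal) := sInf_le ⟨T₀, hT₀, he₀, rfl⟩
        have hnt : sInf S ≠ ⊤ := (lt_of_le_of_lt hub (EReal.coe_lt_top _)).ne
        have hnb : sInf S ≠ ⊥ := ((EReal.bot_lt_coe _).trans_le hlb).ne'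
        set s : ℝ := (sInf S).toReal with hsdef
        have hsS : sInf S = (s : EReal) := (EReal.coe_toReal hnt hnb).symm
        have hes : Real.exp a ≤ s := EReal.coe_le_coe_iff.mp (by rw [← hsS]; exact hlb)
        have hs0 : 0 < s := lt_of_lt_of_le (Real.exp_pos a) hes
        have has : a ≤ Real.log s := (Real.le_log_iff_exp_le hs0).mpr hes
        rw [hsS, elog_coe_pos hs0]
        have hgm : g m = (((m : ℝ)⁻¹ * Dr : ℝ) : EReal) := by
          rw [hgdef]
          simp only
          rw [← hDdef, hDcoe, ← EReal.coe_mul]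
        rw [hgm, hudef]
        rw [← EReal.coe_mul, ← EReal.coe_add]
        apply EReal.coe_le_coe_iff.mpr
        have hac : a = -c - Dr := by rw [hadef, hcdef]; ring
        have h1 : -Real.log s ≤ Dr + c := by
          rw [hac] at has
          linarith
        nlinarith [mul_le_mul_of_nonneg_left h1 (le_of_lt hminv)]
  have hu0 : Filter.Tendsto u atTop (nhds (0 : EReal)) := by
    rw [hudef]
    have h1 : Filter.Tendsto (fun m : ℕ => c * (m : ℝ)⁻¹) atTop (nhds 0) := by
      have h2 := (tendsto_inv_atTop_zero (𝕜 := ℝ)).comp tendsto_natCast_atTop_atTop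
      simpa using h2.const_mul c
    have := EReal.tendsto_coe.mpr h1
    simpa using this
  have hl1 := Filter.limsup_le_limsup (Filter.eventually_atTop.mpr ⟨1, key⟩)
  refine hl1.trans ?_
  have hl2 : Filter.limsup (fun m => g m + u m) atTop
      ≤ Filter.limsup g atTop + Filter.limsup u atTop := by
    apply EReal.limsup_add_le
    · right
      rw [hu0.limsup_eq]
      simp
    · right
      rw [hu0.limsup_eq]
      simp
  refine hl2.trans_eq ?_
  rw [hu0.limsup_eq, add_zero]

end MRD
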